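/- arXiv:1610.01061 — 3 statements merged into one kernel-verified Lean document; each statement's English description precedes it below -/
import Mathlib

section
/- Let p be a prime, χ a nontrivial multiplicative character of F_p, U, V ⊆ F_p finite sets, and complex weights φ_u (u ∈ U), ψ_v (v ∈ V). Then |∑_{u∈U} ∑_{v∈V} φ_u ψ_v χ(u+v)| ≤ sqrt( p · (∑_{u∈U}|φ_u|²) · (∑_{v∈V}|ψ_v|²) ). -/
/-!
Write the double sum as `∑_{u ∈ U} φ u * S u` with `S u = ∑_{v ∈ V} ψ v * χ (u + v)`. Expanding
`|S u|²` and summing over all of `F_p`, the correlations `∑_u χ (u + a) * χ̄ (u + b)` equal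
`p - 1` for `a = b` and, after the substitution `u = -(a - b) x`, `χ (-1) J(χ̄, χ) = -1` otherwise.
Hence `∑_u |S u|² = p ∑ |ψ v|² - |∑ ψ v|² ≤ p ∑ |ψ v|²`, and Cauchy–Schwarz in `u` concludes.
-/

open Finset

theorem norm_sum_mul_le_sqrt_mul_sqrt {ι R : Type*} [NonUnitalSeminormedRing R]
    (s : Finset ι) (f g : ι → R) :
    ‖∑ i ∈ s, f i * g i‖ ≤ √(∑ i ∈ s, ‖f i‖ ^ 2) * √(∑ i ∈ s, ‖g i‖ ^ 2) :=
  (norm_sum_le_of_le s fun i _ ↦ norm_mul_le (f i) (g i)).trans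
    (Real.sum_mul_le_sqrt_mul_sqrt s _ _)

namespace MulChar

variable {F R : Type*} [Field F] [Fintype F]

theorem sum_apply_mul_inv_apply [CommRing R] (χ : MulChar F R) :
    ∑ u, χ u * χ⁻¹ u = Fintype.card F - 1 := by
  classical
  rw [← Nat.cast_one, ← Nat.cast_sub Fintype.card_pos, ← Fintype.card_units,
    ← sum_one_eq_card_units, ← mul_inv_cancel χ]
  rfl

theorem sum_apply_add_mul_inv_apply [CommRing R] [IsDomain R] {χ : MulChar F R} (hχ : χ ≠ 1)
    {c : F} (hc : c ≠ 0) : ∑ u, χ (u + c) * χ⁻¹ u = -1 := by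
  have hneg : χ (-1) * χ (-1) = 1 := by rw [← map_mul, neg_one_mul, neg_neg, map_one]
  have hsubst : ∀ x, χ (-c * x + c) * χ⁻¹ (-c * x) = χ (-1) * (χ⁻¹ x * χ (1 - x)) := by
    intro x
    have hc' : c * (-c)⁻¹ = -1 := by field_simp
    rw [map_mul χ⁻¹, inv_apply' χ (-c), show -c * x + c = c * (1 - x) by ring, map_mul,
      ← hc', map_mul]
    ring
  calc ∑ u, χ (u + c) * χ⁻¹ u = ∑ x, χ (-c * x + c) * χ⁻¹ (-c * x) :=
        (Equiv.sum_comp (Equiv.mulLeft₀ (-c) (neg_ne_zero.mpr hc)) _).symm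
    _ = χ (-1) * jacobiSum χ⁻¹ χ := by simp only [hsubst, ← mul_sum, jacobiSum]
    _ = -1 := by rw [jacobiSum_comm, jacobiSum_nontrivial_inv hχ, mul_neg, hneg]

theorem sum_apply_add_mul_inv_apply_add [DecidableEq F] [CommRing R] [IsDomain R]
    {χ : MulChar F R} (hχ : χ ≠ 1) (a b : F) :
    ∑ u, χ (u + a) * χ⁻¹ (u + b) = if a = b then (Fintype.card F : R) - 1 else -1 := by
  rw [← (Equiv.subRight b).sum_comp]
  simp only [Equiv.subRight_apply, sub_add_cancel, sub_add_eq_add_sub, add_sub_assoc]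
  split_ifs with hab
  · simpa [hab] using sum_apply_mul_inv_apply χ
  · exact sum_apply_add_mul_inv_apply hχ (sub_ne_zero.mpr hab)

open ComplexConjugate in
theorem sum_norm_sq_sum_mul_apply_add {χ : MulChar F ℂ} (hχ : χ ≠ 1)
    (V : Finset F) (ψ : F → ℂ) :
    ∑ u, ‖∑ v ∈ V, ψ v * χ (u + v)‖ ^ 2 =
      Fintype.card F * ∑ v ∈ V, ‖ψ v‖ ^ 2 - ‖∑ v ∈ V, ψ v‖ ^ 2 := by
  classical
  have hconj (x : F) : conj (χ x) = χ⁻¹ x := by rw [starRingEnd_apply, star_apply']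
  have hcorr (v v' : F) : ∑ u, χ (u + v) * χ⁻¹ (u + v') =
      (if v = v' then (Fintype.card F : ℂ) else 0) - 1 := by
    rw [sum_apply_add_mul_inv_apply_add hχ]
    split_ifs <;> ring
  apply Complex.ofReal_injective
  push_cast
  simp only [← Complex.mul_conj', map_sum, map_mul, hconj, sum_mul_sum]
  calc ∑ u, ∑ v ∈ V, ∑ v' ∈ V, ψ v * χ (u + v) * (conj (ψ v') * χ⁻¹ (u + v'))
      = ∑ v ∈ V, ∑ v' ∈ V, ψ v * conj (ψ v') * ∑ u, χ (u + v) * χ⁻¹ (u + v') := by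
        rw [sum_comm]
        refine sum_congr rfl fun v _ ↦ ?_
        rw [sum_comm]
        simp only [mul_sum]
        exact sum_congr rfl fun v' _ ↦ sum_congr rfl fun u _ ↦ by ring
    _ = _ := by
        simp only [hcorr, mul_sub, mul_ite, mul_zero, mul_one, sum_sub_distrib, sum_ite_eq]
        rw [sum_ite_of_true fun _ ↦ id, mul_sum]
        simp only [mul_comm]

theorem sum_norm_sq_sum_mul_apply_add_le {χ : MulChar F ℂ} (hχ : χ ≠ 1)
    (U V : Finset F) (ψ : F → ℂ) :
    ∑ u ∈ U, ‖∑ v ∈ V, ψ v * χ (u + v)‖ ^ 2 ≤ Fintype.card F * ∑ v ∈ V, ‖ψ v‖ ^ 2 :=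
  calc ∑ u ∈ U, ‖∑ v ∈ V, ψ v * χ (u + v)‖ ^ 2
      ≤ ∑ u, ‖∑ v ∈ V, ψ v * χ (u + v)‖ ^ 2 :=
        sum_le_sum_of_subset_of_nonneg (subset_univ U) fun _ _ _ ↦ sq_nonneg _
    _ ≤ Fintype.card F * ∑ v ∈ V, ‖ψ v‖ ^ 2 := by
        rw [sum_norm_sq_sum_mul_apply_add hχ]
        exact sub_le_self _ (sq_nonneg _)

end MulChar

theorem stmt1 {p : ℕ} [Fact p.Prime] (χ : MulChar (ZMod p) ℂ) (hχ : χ ≠ 1)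
    (U V : Finset (ZMod p)) (φ ψ : ZMod p → ℂ) :
    ‖∑ u ∈ U, ∑ v ∈ V, φ u * ψ v * χ (u + v)‖ ≤
      Real.sqrt ((p : ℝ) * (∑ u ∈ U, ‖φ u‖ ^ 2) *
        (∑ v ∈ V, ‖ψ v‖ ^ 2)) := by
  have hsplit : ∑ u ∈ U, ∑ v ∈ V, φ u * ψ v * χ (u + v) =
      ∑ u ∈ U, φ u * ∑ v ∈ V, ψ v * χ (u + v) := by
    simp only [mul_sum, mul_assoc]
  calc ‖∑ u ∈ U, ∑ v ∈ V, φ u * ψ v * χ (u + v)‖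
      ≤ √(∑ u ∈ U, ‖φ u‖ ^ 2) * √(∑ u ∈ U, ‖∑ v ∈ V, ψ v * χ (u + v)‖ ^ 2) :=
        hsplit ▸ norm_sum_mul_le_sqrt_mul_sqrt U _ _
    _ ≤ √(∑ u ∈ U, ‖φ u‖ ^ 2) * √(p * ∑ v ∈ V, ‖ψ v‖ ^ 2) := by
        gcongr
        simpa using MulChar.sum_norm_sq_sum_mul_apply_add_le hχ U V ψ
    _ = √(p * (∑ u ∈ U, ‖φ u‖ ^ 2) * ∑ v ∈ V, ‖ψ v‖ ^ 2) := by
        rw [← Real.sqrt_mul (sum_nonneg fun _ _ ↦ sq_nonneg _), mul_left_comm, mul_assoc]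
end

section
/- Let p be prime, χ a nontrivial multiplicative character of F_p, A, B, C, D ⊆ F_p^* with weights |α_a| ≤ 1, |β_{b,c,d}| ≤ 1, and S = ∑_{a∈A}∑_{b∈B}∑_{c∈C}∑_{d∈D} α_a β_{b,c,d} χ(a+b+cd). Then |S|² ≤ I(B,C,D) · ∑_{λ∈F_p} |∑_{a∈A} α_a χ(a+λ)|², where I(B,C,D) is the number of solutions of b₁+c₁d₁ = b₂+c₂d₂ with bᵢ ∈ B, cᵢ ∈ C, dᵢ ∈ D. -/
/-!
Grouping the terms by `λ = b + c d` writes `S = ∑_λ g(λ) f(λ)` with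
`f(λ) = ∑_a α_a χ(a + λ)` and `g(λ) = ∑_{b + c d = λ} β_{b,c,d}`. Cauchy–Schwarz in `λ` gives
`|S|² ≤ ∑_λ |g(λ)|² · ∑_λ |f(λ)|²`, and since `|β| ≤ 1`, `|g(λ)|` is at most the number `N(λ)` of
representations of `λ`, while `∑_λ N(λ)² = I(B, C, D)`.
-/

open Finset

section Fibers

variable {ι κ : Type*} [DecidableEq κ] [Fintype κ]

theorem card_filter_comp_eq_eq_sum_sq_card_fiber (P : Finset ι) (v : ι → κ) :
    #{st ∈ P ×ˢ P | v st.1 = v st.2} = ∑ l, #{t ∈ P | v t = l} ^ 2 := by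
  rw [card_eq_sum_card_fiberwise (f := fun st => v st.1) (t := univ) fun _ _ => mem_univ _]
  refine sum_congr rfl fun l _ => ?_
  rw [sq, ← card_product, filter_filter]
  congr 1
  ext ⟨s, t⟩
  simp only [mem_filter, mem_product]
  constructor
  · rintro ⟨⟨hs, ht⟩, hst, rfl⟩
    exact ⟨⟨hs, rfl⟩, ht, hst.symm⟩
  · rintro ⟨⟨hs, rfl⟩, ht, hst⟩
    exact ⟨⟨hs, ht⟩, hst.symm, rfl⟩

theorem sum_mul_comp_eq_sum_sum_fiber_mul {R : Type*} [NonUnitalNonAssocSemiring R]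
    (P : Finset ι) (v : ι → κ) (w : ι → R) (f : κ → R) :
    ∑ t ∈ P, w t * f (v t) = ∑ l, (∑ t ∈ P with v t = l, w t) * f l := by
  rw [← sum_fiberwise P v]
  refine sum_congr rfl fun l _ => ?_
  rw [sum_mul]
  exact sum_congr rfl fun t ht => by rw [(mem_filter.mp ht).2]

theorem norm_sum_mul_comp_sq_le {R : Type*} [SeminormedRing R] {P : Finset ι} (v : ι → κ)
    {w : ι → R} (f : κ → R) (hw : ∀ t ∈ P, ‖w t‖ ≤ 1) :
    ‖∑ t ∈ P, w t * f (v t)‖ ^ 2 ≤ #{st ∈ P ×ˢ P | v st.1 = v st.2} * ∑ l, ‖f l‖ ^ 2 := by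
  set g : κ → R := fun l => ∑ t ∈ P with v t = l, w t
  have hg (l : κ) : ‖g l‖ ≤ #{t ∈ P | v t = l} := by
    simpa using norm_sum_le_of_le _ fun t ht => hw t (mem_filter.mp ht).1
  rw [sum_mul_comp_eq_sum_sum_fiber_mul, card_filter_comp_eq_eq_sum_sq_card_fiber]
  push_cast
  calc ‖∑ l, g l * f l‖ ^ 2
      ≤ (∑ l, ‖g l‖ * ‖f l‖) ^ 2 := by
        gcongr
        exact (norm_sum_le _ _).trans (sum_le_sum fun l _ => norm_mul_le _ _)
    _ ≤ (∑ l, ‖g l‖ ^ 2) * ∑ l, ‖f l‖ ^ 2 := sum_mul_sq_le_sq_mul_sq _ _ _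
    _ ≤ (∑ l, (#{t ∈ P | v t = l} : ℝ) ^ 2) * ∑ l, ‖f l‖ ^ 2 := by
        gcongr with l
        exact hg l

end Fibers

theorem stmt6_general {p : ℕ} [Fact p.Prime] (χ : MulChar (ZMod p) ℂ)
    (A B C D : Finset (ZMod p))
    (α : ZMod p → ℂ) (β : ZMod p → ZMod p → ZMod p → ℂ)
    (hβ : ∀ b ∈ B, ∀ c ∈ C, ∀ d ∈ D, ‖β b c d‖ ≤ 1) :
    ‖∑ a ∈ A, ∑ b ∈ B, ∑ c ∈ C, ∑ d ∈ D,
        α a * β b c d * χ (a + b + c * d)‖ ^ 2 ≤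
      ((((B ×ˢ C ×ˢ D) ×ˢ (B ×ˢ C ×ˢ D)).filter
          (fun t => t.1.1 + t.1.2.1 * t.1.2.2 = t.2.1 + t.2.2.1 * t.2.2.2)).card : ℝ) *
        ∑ l : ZMod p, ‖∑ a ∈ A, α a * χ (a + l)‖ ^ 2 := by
  set f : ZMod p → ℂ := fun l => ∑ a ∈ A, α a * χ (a + l)
  have hS : ∑ a ∈ A, ∑ b ∈ B, ∑ c ∈ C, ∑ d ∈ D, α a * β b c d * χ (a + b + c * d) =
      ∑ t ∈ B ×ˢ C ×ˢ D, β t.1 t.2.1 t.2.2 * f (t.1 + t.2.1 * t.2.2) := by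
    simp only [sum_product, f, mul_sum]
    rw [sum_comm]
    refine sum_congr rfl fun b _ => ?_
    rw [sum_comm]
    refine sum_congr rfl fun c _ => ?_
    rw [sum_comm]
    refine sum_congr rfl fun d _ => sum_congr rfl fun a _ => ?_
    rw [add_assoc]
    ring
  have hw : ∀ t ∈ B ×ˢ C ×ˢ D, ‖β t.1 t.2.1 t.2.2‖ ≤ 1 := by
    rintro ⟨b, c, d⟩ hbcd
    simp only [mem_product] at hbcd
    exact hβ b hbcd.1 c hbcd.2.1 d hbcd.2.2
  rw [hS]
  -- stated first and matched afterwards: unifying `w` against the goal directly times out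
  have hCS :=
    norm_sum_mul_comp_sq_le (fun t : ZMod p × ZMod p × ZMod p => t.1 + t.2.1 * t.2.2) f hw
  exact hCS

theorem stmt6 {p : ℕ} [Fact p.Prime] (χ : MulChar (ZMod p) ℂ) (hχ : χ ≠ 1)
    (A B C D : Finset (ZMod p)) (hA : (0 : ZMod p) ∉ A) (hB : (0 : ZMod p) ∉ B)
    (hC : (0 : ZMod p) ∉ C) (hD : (0 : ZMod p) ∉ D)
    (α : ZMod p → ℂ) (β : ZMod p → ZMod p → ZMod p → ℂ)
    (hα : ∀ a ∈ A, ‖α a‖ ≤ 1)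
    (hβ : ∀ b ∈ B, ∀ c ∈ C, ∀ d ∈ D, ‖β b c d‖ ≤ 1) :
    ‖∑ a ∈ A, ∑ b ∈ B, ∑ c ∈ C, ∑ d ∈ D,
        α a * β b c d * χ (a + b + c * d)‖ ^ 2 ≤
      ((((B ×ˢ C ×ˢ D) ×ˢ (B ×ˢ C ×ˢ D)).filter
          (fun t => t.1.1 + t.1.2.1 * t.1.2.2 = t.2.1 + t.2.2.1 * t.2.2.2)).card : ℝ) *
        ∑ l : ZMod p, ‖∑ a ∈ A, α a * χ (a + l)‖ ^ 2 :=
  stmt6_general χ A B C D α β hβ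
end

section
/- Let p be prime, A, B, C, D ⊆ F_p^* of cardinalities A, B, C, D with BCD ≤ p² and M = max{B,C,D}, and weights |α_a| ≤ 1, |β_{b,c,d}| ≤ 1. Then V = ∑_{a,b,c,d} α_a β_{b,c,d} e_p(ab(c+d)) satisfies |V| = O( p^{1/2} ((BCD)^{3/4} + (BCD·M)^{1/2}) A^{1/2} ), assuming J(B,C,D) = O((BCD)^{3/2} + BCD·M). -/
/-!
Write `V = ∑_{a ∈ A} α_a f(a)` with `f(a) = ∑_{t ∈ B×C×D} β_t e_p(a g(t))` and `g(b,c,d) = b(c+d)`.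
Cauchy–Schwarz and extending the sum over `a` to all of `F_p` give `|V|² ≤ |A| ∑_a |f(a)|²`, and by
orthogonality of additive characters `∑_a |f(a)|² ≤ p J(B,C,D)`, since only pairs `t, t'` with
`g(t) = g(t')` survive. The assumed bound on `J` then gives the result with constant `1`, using
`√(x + y) ≤ √x + √y`.
-/

open Finset ComplexConjugate

lemma sq_norm_sum_mul_le_card_mul {ι R : Type*} [Fintype ι] [SeminormedRing R] (A : Finset ι)
    (α f : ι → R) (hα : ∀ a ∈ A, ‖α a‖ ≤ 1) :
    ‖∑ a ∈ A, α a * f a‖ ^ 2 ≤ #A * ∑ a, ‖f a‖ ^ 2 :=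
  calc ‖∑ a ∈ A, α a * f a‖ ^ 2 ≤ (∑ a ∈ A, ‖f a‖) ^ 2 := by
        gcongr
        refine (norm_sum_le _ _).trans (sum_le_sum fun a ha => ?_)
        exact (norm_mul_le _ _).trans (mul_le_of_le_one_left (norm_nonneg _) (hα a ha))
    _ ≤ #A * ∑ a ∈ A, ‖f a‖ ^ 2 := sq_sum_le_card_mul_sum_sq
    _ ≤ #A * ∑ a, ‖f a‖ ^ 2 := by
        gcongr
        exact subset_univ A

lemma Real.sqrt_rpow_three_halves_add_le {x y : ℝ} (hx : 0 ≤ x) (hy : 0 ≤ y) :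
    √(x ^ (3 / 2 : ℝ) + y) ≤ x ^ (3 / 4 : ℝ) + y ^ (1 / 2 : ℝ) := by
  rw [Real.sqrt_eq_rpow]
  refine (Real.rpow_add_le_add_rpow (by positivity) hy (by norm_num) (by norm_num)).trans_eq ?_
  rw [← Real.rpow_mul hx]
  norm_num

namespace ZMod

variable {N : ℕ} [NeZero N]

lemma stdAddChar_val (x : ZMod N) :
    stdAddChar x = Complex.exp (2 * Real.pi * Complex.I * x.val / N) := by
  simpa using stdAddChar_coe (N := N) x.val

lemma sum_stdAddChar_mul (u : ZMod N) :
    ∑ a : ZMod N, stdAddChar (a * u) = if u = 0 then (N : ℂ) else 0 := by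
  simpa using AddChar.sum_mulShift u (isPrimitive_stdAddChar N)

lemma sum_sq_norm_sum_stdAddChar {ι : Type*} (s : Finset ι) (w : ι → ℂ) (g : ι → ZMod N) :
    ((∑ a, ‖∑ t ∈ s, w t * stdAddChar (a * g t)‖ ^ 2 : ℝ) : ℂ) =
      N * ∑ x ∈ s ×ˢ s with g x.1 = g x.2, w x.1 * conj (w x.2) := by
  have expand (a : ZMod N) : (‖∑ t ∈ s, w t * stdAddChar (a * g t)‖ ^ 2 : ℂ) =
      ∑ x ∈ s ×ˢ s, w x.1 * conj (w x.2) * stdAddChar (a * (g x.1 - g x.2)) := by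
    rw [← Complex.mul_conj', map_sum, sum_mul_sum, ← sum_product']
    refine sum_congr rfl fun x _ => ?_
    rw [map_mul (starRingEnd ℂ), ← AddChar.map_neg_eq_conj, mul_sub, sub_eq_add_neg,
      AddChar.map_add_eq_mul]
    ring
  push_cast
  simp_rw [expand]
  rw [sum_comm, sum_filter, mul_sum]
  refine sum_congr rfl fun x _ => ?_
  simp_rw [← mul_sum, sum_stdAddChar_mul, sub_eq_zero]
  split_ifs <;> ring

lemma sum_sq_norm_sum_stdAddChar_le {ι : Type*} (s : Finset ι) (w : ι → ℂ) (g : ι → ZMod N)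
    (hw : ∀ t ∈ s, ‖w t‖ ≤ 1) :
    ∑ a, ‖∑ t ∈ s, w t * stdAddChar (a * g t)‖ ^ 2 ≤ N * #{x ∈ s ×ˢ s | g x.1 = g x.2} := by
  have hnonneg : 0 ≤ ∑ a, ‖∑ t ∈ s, w t * stdAddChar (a * g t)‖ ^ 2 := by positivity
  rw [← Real.norm_of_nonneg hnonneg, ← Complex.norm_real, sum_sq_norm_sum_stdAddChar, norm_mul,
    Complex.norm_natCast]
  gcongr
  refine (norm_sum_le _ _).trans ?_
  rw [card_eq_sum_ones, Nat.cast_sum]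
  refine sum_le_sum fun x hx => ?_
  obtain ⟨hx₁, hx₂⟩ := mem_product.1 (mem_filter.1 hx).1
  rw [norm_mul, Complex.norm_conj, Nat.cast_one]
  exact mul_le_one₀ (hw _ hx₁) (norm_nonneg _) (hw _ hx₂)

theorem sq_norm_sum_mul_sum_stdAddChar_le {ι : Type*} (A : Finset (ZMod N)) (s : Finset ι)
    (α : ZMod N → ℂ) (w : ι → ℂ) (g : ι → ZMod N)
    (hα : ∀ a ∈ A, ‖α a‖ ≤ 1) (hw : ∀ t ∈ s, ‖w t‖ ≤ 1) :
    ‖∑ a ∈ A, α a * ∑ t ∈ s, w t * stdAddChar (a * g t)‖ ^ 2 ≤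
      #A * (N * #{x ∈ s ×ˢ s | g x.1 = g x.2}) :=
  (sq_norm_sum_mul_le_card_mul A α _ hα).trans <| by
    gcongr
    exact sum_sq_norm_sum_stdAddChar_le s w g hw

end ZMod

theorem stmt17 :
    ∃ c : ℝ, 0 < c ∧
      ∀ (p : ℕ) (_ : p.Prime) (A B C D : Finset (ZMod p)),
        (0 : ZMod p) ∉ A → (0 : ZMod p) ∉ B → (0 : ZMod p) ∉ C → (0 : ZMod p) ∉ D →
        B.card * C.card * D.card ≤ p ^ 2 →
        ∀ (α : ZMod p → ℂ) (β : ZMod p → ZMod p → ZMod p → ℂ),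
          (∀ a ∈ A, ‖α a‖ ≤ 1) →
          (∀ b ∈ B, ∀ cc ∈ C, ∀ d ∈ D, ‖β b cc d‖ ≤ 1) →
          ∀ c₁ : ℝ, 0 ≤ c₁ →
          ((((B ×ˢ C ×ˢ D) ×ˢ (B ×ˢ C ×ˢ D)).filter
              (fun t => t.1.1 * (t.1.2.1 + t.1.2.2) = t.2.1 * (t.2.2.1 + t.2.2.2))).card : ℝ) ≤
            c₁ * (((B.card * C.card * D.card : ℝ)) ^ ((3 : ℝ) / 2) +
              (B.card * C.card * D.card : ℝ) * (max (max B.card C.card) D.card : ℕ)) →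
          ‖∑ a ∈ A, ∑ b ∈ B, ∑ cc ∈ C, ∑ d ∈ D,
              α a * β b cc d *
                Complex.exp (2 * Real.pi * Complex.I *
                  (((a * b * (cc + d)).val : ℂ)) / p)‖ ≤
            c * Real.sqrt c₁ * (p : ℝ) ^ ((1 : ℝ) / 2) *
              (((B.card * C.card * D.card : ℝ)) ^ ((3 : ℝ) / 4) +
                ((B.card * C.card * D.card : ℝ) *
                  (max (max B.card C.card) D.card : ℕ)) ^ ((1 : ℝ) / 2)) *
              (A.card : ℝ) ^ ((1 : ℝ) / 2) := by
  refine ⟨1, one_pos, fun p hp A B C D _ _ _ _ _ α β hα hβ c₁ hc₁ hJ => ?_⟩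
  have : NeZero p := ⟨hp.ne_zero⟩
  set Y : ℝ := B.card * C.card * D.card
  set M : ℝ := ((max (max B.card C.card) D.card : ℕ) : ℝ)
  have hV : ∑ a ∈ A, ∑ b ∈ B, ∑ cc ∈ C, ∑ d ∈ D, α a * β b cc d *
      Complex.exp (2 * Real.pi * Complex.I * (((a * b * (cc + d)).val : ℂ)) / p) =
      ∑ a ∈ A, α a * ∑ t ∈ B ×ˢ C ×ˢ D,
        β t.1 t.2.1 t.2.2 * ZMod.stdAddChar (a * (t.1 * (t.2.1 + t.2.2))) := by
    simp only [sum_product, mul_sum, ZMod.stdAddChar_val, mul_assoc]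
  have hsq := ZMod.sq_norm_sum_mul_sum_stdAddChar_le A (B ×ˢ C ×ˢ D) α
    (fun t => β t.1 t.2.1 t.2.2) (fun t => t.1 * (t.2.1 + t.2.2)) hα (by
      simp only [mem_product]
      exact fun t ht => hβ _ ht.1 _ ht.2.1 _ ht.2.2)
  rw [hV]
  calc _ ≤ √(#A * (p * (c₁ * (Y ^ (3 / 2 : ℝ) + Y * M)))) :=
        Real.le_sqrt_of_sq_le (hsq.trans (by gcongr))
    _ = √c₁ * √p * √(Y ^ (3 / 2 : ℝ) + Y * M) * √(#A : ℝ) := by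
        rw [Real.sqrt_mul (by positivity), Real.sqrt_mul (by positivity), Real.sqrt_mul hc₁]
        ring
    _ ≤ 1 * √c₁ * (p : ℝ) ^ (1 / 2 : ℝ) * (Y ^ (3 / 4 : ℝ) + (Y * M) ^ (1 / 2 : ℝ)) *
          (#A : ℝ) ^ (1 / 2 : ℝ) := by
        rw [one_mul, Real.sqrt_eq_rpow p, Real.sqrt_eq_rpow #A]
        gcongr
        exact Real.sqrt_rpow_three_halves_add_le (by positivity) (by positivity)
end
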